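/- arXiv:1310.2703 — 3 statements merged into one kernel-verified Lean document; each statement's English description precedes it below -/
import Mathlib

section
/- The user rate equals the negative logarithm of the minimum mean square error: log(1 + SINR) = −log(mse(μ*)), where μ* = conj(a_n)/c, c = Σ_{m=1}^N |a_m|² + σ², and SINR = |a_n|²/(Σ_{m≠n} |a_m|² + σ²). -/
/-! Writing `I` for the interference-plus-noise power, the coefficient `μ* = conj aₙ / (‖aₙ‖² + I)`
leaves the real residual `1 - μ* aₙ = I / (‖aₙ‖² + I)`, and its mean square error collapses to
`I / (‖aₙ‖² + I) = 1 / (1 + SINR)`. -/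

open ComplexConjugate

theorem norm_conj_div_sq_mul_add_norm_one_sub_conj_div_mul_sq (a : ℂ) {I : ℝ}
    (hc : ‖a‖ ^ 2 + I ≠ 0) :
    ‖conj a / ((‖a‖ ^ 2 + I : ℝ) : ℂ)‖ ^ 2 * I
        + ‖1 - conj a / ((‖a‖ ^ 2 + I : ℝ) : ℂ) * a‖ ^ 2 = I / (‖a‖ ^ 2 + I) := by
  set c := ‖a‖ ^ 2 + I
  have h_norm : ‖conj a / (c : ℂ)‖ = ‖a‖ / |c| := by
    rw [norm_div, RCLike.norm_conj, Complex.norm_real, Real.norm_eq_abs]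
  have h_residual : 1 - conj a / (c : ℂ) * a = ((I / c : ℝ) : ℂ) := by
    have h_conj_mul : conj a * a = ((‖a‖ ^ 2 : ℝ) : ℂ) := by
      rw [mul_comm, Complex.mul_conj, Complex.normSq_eq_norm_sq]
    rw [div_mul_eq_mul_div, h_conj_mul, sub_eq_iff_eq_add, ← Complex.ofReal_one]
    norm_cast
    field_simp
    ring
  rw [h_norm, h_residual, Complex.norm_real, Real.norm_eq_abs, sq_abs, div_pow, div_pow, sq_abs]
  field_simp
  ring

theorem Real.log_one_add_div_eq_neg_log_div (s : ℝ) {I : ℝ} (hI : I ≠ 0) :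
    Real.log (1 + s / I) = -Real.log (I / (s + I)) := by
  rw [← Real.log_inv, inv_div, one_add_div hI, add_comm]

theorem rate_eq_neg_log_mmse_general
    {N : ℕ}
    (σsq : ℝ) (hσ : 0 < σsq) (n : Fin N)
    (a : Fin N → ℂ)
    (mse : ℂ → ℝ)
    (hmse : ∀ μ : ℂ, mse μ =
      ‖μ‖ ^ 2 * ∑ m ∈ Finset.univ.erase n, ‖a m‖ ^ 2
        + ‖μ‖ ^ 2 * σsq + ‖1 - μ * a n‖ ^ 2)
    (c : ℝ) (hc : c = ∑ m, ‖a m‖ ^ 2 + σsq)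
    (SINR : ℝ)
    (hSINR : SINR = ‖a n‖ ^ 2 / (∑ m ∈ Finset.univ.erase n, ‖a m‖ ^ 2 + σsq)) :
    Real.log (1 + SINR) = - Real.log (mse ((starRingEnd ℂ) (a n) / (c : ℂ))) := by
  set I := ∑ m ∈ Finset.univ.erase n, ‖a m‖ ^ 2 + σsq with hI_def
  have hI : 0 < I := add_pos_of_nonneg_of_pos (by positivity) hσ
  have hc' : c = ‖a n‖ ^ 2 + I := by
    rw [hc, ← Finset.add_sum_erase _ _ (Finset.mem_univ n), add_assoc]
  have h_mmse : mse (conj (a n) / c) = I / c := by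
    rw [hmse, ← mul_add, ← hI_def, hc']
    exact norm_conj_div_sq_mul_add_norm_one_sub_conj_div_mul_sq (a n) (by positivity)
  rw [hSINR, h_mmse, hc', Real.log_one_add_div_eq_neg_log_div _ hI.ne']

/-- the user rate equals the negative logarithm of the minimum MSE:
`log(1 + SINR) = −log(mse μ*)`. -/
theorem rate_eq_neg_log_mmse
    {M N : ℕ} (h : EuclideanSpace ℂ (Fin M)) (w : Fin N → EuclideanSpace ℂ (Fin M))
    (σsq : ℝ) (hσ : 0 < σsq) (n : Fin N)
    (a : Fin N → ℂ) (ha : ∀ m, a m = (inner ℂ h (w m) : ℂ))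
    (mse : ℂ → ℝ)
    (hmse : ∀ μ : ℂ, mse μ =
      ‖μ‖ ^ 2 * ∑ m ∈ Finset.univ.erase n, ‖a m‖ ^ 2
        + ‖μ‖ ^ 2 * σsq + ‖1 - μ * a n‖ ^ 2)
    (c : ℝ) (hc : c = ∑ m, ‖a m‖ ^ 2 + σsq)
    (SINR : ℝ)
    (hSINR : SINR = ‖a n‖ ^ 2 / (∑ m ∈ Finset.univ.erase n, ‖a m‖ ^ 2 + σsq)) :
    Real.log (1 + SINR) = - Real.log (mse ((starRingEnd ℂ) (a n) / (c : ℂ))) :=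
  rate_eq_neg_log_mmse_general σsq hσ n a mse hmse c hc SINR hSINR
end

section
/- The user rate admits the variational characterization log(1 + SINR) = sup over μ ∈ ℂ and s > 0 of (−s·mse(μ) + log s + 1), and the supremum is attained at μ = μ* = conj(a_n)/c and s = 1/mse(μ*), where c = Σ_{m=1}^N |a_m|² + σ² and SINR = |a_n|²/(Σ_{m≠n} |a_m|² + σ²). -/
/-! Completing the square in `μ` gives `mse μ = c‖μ - μ*‖² + I/c`, where `I` is the
interference-plus-noise power, so `mse` is minimised at `μ*` with value `I/c = 1/(1 + SINR)`.
The rest is the scalar inequality `log t ≤ t - 1` applied to `t = s·mse μ`, which gives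
`-s·mse μ + log s + 1 ≤ -log (mse μ) ≤ -log (I/c)`, with equality at `s = 1/mse μ*`. -/

open Real

theorem sq_norm_mul_add_sq_norm_one_sub_mul (a μ : ℂ) {I : ℝ} (hc : ‖a‖ ^ 2 + I ≠ 0) :
    ‖μ‖ ^ 2 * I + ‖1 - μ * a‖ ^ 2
      = (‖a‖ ^ 2 + I) * ‖μ - starRingEnd ℂ a / ((‖a‖ ^ 2 + I : ℝ) : ℂ)‖ ^ 2
        + I / (‖a‖ ^ 2 + I) := by
  have hc' : ((‖a‖ ^ 2 + I : ℝ) : ℂ) ≠ 0 := by exact_mod_cast hc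
  rw [sub_div' hc', norm_div, Complex.norm_real, Real.norm_eq_abs, div_pow, sq_abs]
  simp only [← Complex.normSq_eq_norm_sq] at *
  field_simp
  simp only [Complex.normSq_apply, Complex.mul_re, Complex.mul_im, Complex.sub_re,
    Complex.sub_im, Complex.one_re, Complex.one_im, Complex.ofReal_re, Complex.ofReal_im,
    Complex.conj_re, Complex.conj_im, Complex.ofReal_add, Complex.add_re, Complex.add_im]
  ring

namespace Real

theorem neg_mul_add_log_add_one_le_neg_log {x s : ℝ} (hx : 0 < x) (hs : 0 < s) :
    -s * x + log s + 1 ≤ -log x := by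
  have := log_le_sub_one_of_pos (mul_pos hs hx)
  rw [log_mul hs.ne' hx.ne'] at this
  linarith

theorem neg_one_div_mul_add_log_one_div_add_one {x : ℝ} (hx : x ≠ 0) :
    -(1 / x) * x + log (1 / x) + 1 = -log x := by
  rw [one_div, log_inv, neg_mul, inv_mul_cancel₀ hx]
  ring

theorem isGreatest_neg_mul_add_log_add_one {α : Type*} (f : α → ℝ) {x₀ : α}
    (hmin : ∀ x, f x₀ ≤ f x) (hpos : 0 < f x₀) :
    IsGreatest {y | ∃ x, ∃ s : ℝ, 0 < s ∧ y = -s * f x + log s + 1} (-log (f x₀)) := by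
  refine ⟨⟨x₀, 1 / f x₀, by positivity,
    (neg_one_div_mul_add_log_one_div_add_one hpos.ne').symm⟩, ?_⟩
  rintro y ⟨x, s, hs, rfl⟩
  calc -s * f x + log s + 1 ≤ -log (f x) :=
        neg_mul_add_log_add_one_le_neg_log (hpos.trans_le (hmin x)) hs
    _ ≤ -log (f x₀) := neg_le_neg (log_le_log hpos (hmin x))

end Real

theorem rate_variational_characterization_general
    {N : ℕ}
    (σsq : ℝ) (hσ : 0 < σsq) (n : Fin N)
    (a : Fin N → ℂ)
    (mse : ℂ → ℝ)
    (hmse : ∀ μ : ℂ, mse μ =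
      ‖μ‖ ^ 2 * ∑ m ∈ Finset.univ.erase n, ‖a m‖ ^ 2
        + ‖μ‖ ^ 2 * σsq + ‖1 - μ * a n‖ ^ 2)
    (c : ℝ) (hc : c = ∑ m, ‖a m‖ ^ 2 + σsq)
    (SINR : ℝ)
    (hSINR : SINR = ‖a n‖ ^ 2 / (∑ m ∈ Finset.univ.erase n, ‖a m‖ ^ 2 + σsq))
    (μstar : ℂ) (hμstar : μstar = (starRingEnd ℂ) (a n) / (c : ℂ))
    (sstar : ℝ) (hsstar : sstar = 1 / mse μstar) :
    Real.log (1 + SINR)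
        = sSup {y : ℝ | ∃ μ : ℂ, ∃ s : ℝ, 0 < s ∧ y = -s * mse μ + Real.log s + 1} ∧
    (∀ μ : ℂ, ∀ s : ℝ, 0 < s →
        -s * mse μ + Real.log s + 1 ≤ Real.log (1 + SINR)) ∧
    Real.log (1 + SINR) = -sstar * mse μstar + Real.log sstar + 1 := by
  set I := ∑ m ∈ Finset.univ.erase n, ‖a m‖ ^ 2 + σsq
  have hI : 0 < I := by positivity
  have hcI : c = ‖a n‖ ^ 2 + I := by
    rw [hc, ← Finset.add_sum_erase _ _ (Finset.mem_univ n)]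
    ring
  have hcpos : 0 < c := by rw [hcI]; positivity
  have hmse_eq : ∀ μ, mse μ = c * ‖μ - μstar‖ ^ 2 + I / c := fun μ => by
    rw [hmse, hμstar, hcI, ← sq_norm_mul_add_sq_norm_one_sub_mul _ _ (hcI ▸ hcpos.ne')]
    ring
  have hmin : mse μstar = I / c := by simp [hmse_eq]
  have hgreatest := Real.isGreatest_neg_mul_add_log_add_one mse
    (x₀ := μstar) (fun μ => by rw [hmin, hmse_eq]; nlinarith [sq_nonneg ‖μ - μstar‖])
    (by rw [hmin]; positivity)
  have hlog : Real.log (1 + SINR) = -Real.log (mse μstar) := by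
    rw [hmin, ← Real.log_inv, inv_div, hSINR, hcI]
    congr 1
    field_simp
    ring
  refine ⟨hlog ▸ hgreatest.csSup_eq.symm, fun μ s hs => hlog ▸ hgreatest.2 ⟨μ, s, hs, rfl⟩, ?_⟩
  rw [hlog, hsstar, Real.neg_one_div_mul_add_log_one_div_add_one (by rw [hmin]; positivity)]

/-- the variational characterization of the user rate:
`log(1 + SINR) = sup_{μ ∈ ℂ, s > 0} (−s·mse(μ) + log s + 1)`, and the supremum
is attained at `μ = μ* = conj(a_n)/c` and `s = 1/mse(μ*)`. -/
theorem rate_variational_characterization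
    {M N : ℕ} (h : EuclideanSpace ℂ (Fin M)) (w : Fin N → EuclideanSpace ℂ (Fin M))
    (σsq : ℝ) (hσ : 0 < σsq) (n : Fin N)
    (a : Fin N → ℂ) (ha : ∀ m, a m = (inner ℂ h (w m) : ℂ))
    (mse : ℂ → ℝ)
    (hmse : ∀ μ : ℂ, mse μ =
      ‖μ‖ ^ 2 * ∑ m ∈ Finset.univ.erase n, ‖a m‖ ^ 2
        + ‖μ‖ ^ 2 * σsq + ‖1 - μ * a n‖ ^ 2)
    (c : ℝ) (hc : c = ∑ m, ‖a m‖ ^ 2 + σsq)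
    (SINR : ℝ)
    (hSINR : SINR = ‖a n‖ ^ 2 / (∑ m ∈ Finset.univ.erase n, ‖a m‖ ^ 2 + σsq))
    (μstar : ℂ) (hμstar : μstar = (starRingEnd ℂ) (a n) / (c : ℂ))
    (sstar : ℝ) (hsstar : sstar = 1 / mse μstar) :
    Real.log (1 + SINR)
        = sSup {y : ℝ | ∃ μ : ℂ, ∃ s : ℝ, 0 < s ∧ y = -s * mse μ + Real.log s + 1} ∧
    (∀ μ : ℂ, ∀ s : ℝ, 0 < s →
        -s * mse μ + Real.log s + 1 ≤ Real.log (1 + SINR)) ∧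
    Real.log (1 + SINR) = -sstar * mse μstar + Real.log sstar + 1 :=
  rate_variational_characterization_general σsq hσ n a mse hmse c hc SINR hSINR μstar hμstar sstar
    hsstar
end

section
/- Let S be a nonempty set, I a nonempty finite index set, and N_n, D_n : S → ℝ with D_n(x) > 0 for all n ∈ I, x ∈ S. Suppose η ∈ ℝ and x* ∈ S satisfy min_{n∈I} (N_n(x*) − η·D_n(x*)) = 0 and min_{n∈I} (N_n(x) − η·D_n(x)) ≤ 0 for every x ∈ S. Then min_{n∈I} N_n(x*)/D_n(x*) = η and min_{n∈I} N_n(x)/D_n(x) ≤ η for every x ∈ S; that is, x* maximizes the fractional objective and η is its optimal value. -/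
namespace Finset

variable {𝕜 ι : Type*} [Field 𝕜] [LinearOrder 𝕜] [IsStrictOrderedRing 𝕜]
  {s : Finset ι} (hs : s.Nonempty) {f g : ι → 𝕜}

theorem inf'_div_le_iff_inf'_sub_mul_nonpos (hg : ∀ i ∈ s, 0 < g i) (η : 𝕜) :
    s.inf' hs (fun i => f i / g i) ≤ η ↔ s.inf' hs (fun i => f i - η * g i) ≤ 0 := by
  simp only [inf'_le_iff]
  refine exists_congr fun i => and_congr_right fun hi => ?_
  rw [div_le_iff₀ (hg i hi), sub_nonpos]

theorem le_inf'_div_iff_nonneg_inf'_sub_mul (hg : ∀ i ∈ s, 0 < g i) (η : 𝕜) :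
    η ≤ s.inf' hs (fun i => f i / g i) ↔ 0 ≤ s.inf' hs (fun i => f i - η * g i) := by
  simp only [le_inf'_iff]
  refine forall₂_congr fun i hi => ?_
  rw [le_div_iff₀ (hg i hi), sub_nonneg]

end Finset

theorem dinkelbach_converse_general
    {S ι : Type*} [Fintype ι] [Nonempty ι]
    (N D : ι → S → ℝ) (hD : ∀ n x, 0 < D n x)
    (η : ℝ) (xstar : S)
    (hzero : (Finset.univ.inf' Finset.univ_nonempty
        fun n => N n xstar - η * D n xstar) = 0)
    (hopt : ∀ x : S,
      (Finset.univ.inf' Finset.univ_nonempty fun n => N n x - η * D n x) ≤ 0) :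
    (Finset.univ.inf' Finset.univ_nonempty
        fun n => N n xstar / D n xstar) = η ∧
    (∀ x : S,
      (Finset.univ.inf' Finset.univ_nonempty fun n => N n x / D n x) ≤ η) := by
  have hD' : ∀ x, ∀ n ∈ Finset.univ, 0 < D n x := fun x n _ => hD n x
  have hle : ∀ x : S,
      (Finset.univ.inf' Finset.univ_nonempty fun n => N n x / D n x) ≤ η := fun x =>
    (Finset.inf'_div_le_iff_inf'_sub_mul_nonpos _ (hD' x) η).2 (hopt x)
  have hge : η ≤ Finset.univ.inf' Finset.univ_nonempty fun n => N n xstar / D n xstar :=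
    (Finset.le_inf'_div_iff_nonneg_inf'_sub_mul _ (hD' xstar) η).2 hzero.ge
  exact ⟨le_antisymm (hle xstar) hge, hle⟩

/-- converse Dinkelbach direction: if `x*` attains the parametric
problem at parameter `η` with optimal value `0`, then `x*` maximizes the
fractional objective and `η` is its optimal value. -/
theorem dinkelbach_converse
    {S ι : Type*} [Nonempty S] [Fintype ι] [Nonempty ι]
    (N D : ι → S → ℝ) (hD : ∀ n x, 0 < D n x)
    (η : ℝ) (xstar : S)
    (hzero : (Finset.univ.inf' Finset.univ_nonempty
        fun n => N n xstar - η * D n xstar) = 0)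
    (hopt : ∀ x : S,
      (Finset.univ.inf' Finset.univ_nonempty fun n => N n x - η * D n x) ≤ 0) :
    (Finset.univ.inf' Finset.univ_nonempty
        fun n => N n xstar / D n xstar) = η ∧
    (∀ x : S,
      (Finset.univ.inf' Finset.univ_nonempty fun n => N n x / D n x) ≤ η) :=
  dinkelbach_converse_general N D hD η xstar hzero hopt
end
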